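/- arXiv:1602.03924 — 2 statements merged into one kernel-verified Lean document; each statement's English description precedes it below -/
import Mathlib

section
/- Let ℱ be the collection of all maximally evident C-indicating events of Ω (events that are the maximally evident C-indicating superset of some nonempty event). Then ℱ is a finite collection that can be enumerated as a strictly nested chain E₁ ⊃ E₂ ⊃ ... ⊃ E_n whose C-evidence levels are strictly increasing, and for every index i > 1, E_i is the largest super-evident C-indicating subset of E_{i−1}. -/
open Finset

variable {Ω : Type*}

/-- The conditional probability `P_i(E | ω) = μ(E ∩ Π_i(ω)) / μ(Π_i(ω))`,
where `part i ω` is the cell of player `i`'s information partition containing `ω`. -/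
noncomputable def condP [Fintype Ω] [DecidableEq Ω] (μ : Ω → ℝ)
    (part : Fin 2 → Ω → Finset Ω) (i : Fin 2) (E : Finset Ω) (ω : Ω) : ℝ :=
  (∑ x ∈ E ∩ part i ω, μ x) / (∑ x ∈ part i ω, μ x)

/-- `E` is `p`-evident: every player `p`-believes `E` at every state of `E`. -/
def pEvident [Fintype Ω] [DecidableEq Ω] (μ : Ω → ℝ)
    (part : Fin 2 → Ω → Finset Ω) (p : ℝ) (E : Finset Ω) : Prop :=
  ∀ i : Fin 2, ∀ ω ∈ E, p ≤ condP μ part i E ω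

/-- `E` is a `p`-evident `C`-indicating event. -/
def pEvidentInd [Fintype Ω] [DecidableEq Ω] (μ : Ω → ℝ)
    (part : Fin 2 → Ω → Finset Ω) (p : ℝ) (C E : Finset Ω) : Prop :=
  pEvident μ part p E ∧ ∀ i : Fin 2, ∀ ω ∈ E, p ≤ condP μ part i C ω

/-- `E` is the largest `p`-evident `C`-indicating event. -/
def isLargestInd [Fintype Ω] [DecidableEq Ω] (μ : Ω → ℝ)
    (part : Fin 2 → Ω → Finset Ω) (p : ℝ) (C E : Finset Ω) : Prop :=
  pEvidentInd μ part p C E ∧ ∀ F : Finset Ω, pEvidentInd μ part p C F → F ⊆ E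

/-- `p` is the `C`-evidence level of `E`: the maximum `q` for which `E` is a
`q`-evident `C`-indicating event. -/
def isEvidenceLevel [Fintype Ω] [DecidableEq Ω] (μ : Ω → ℝ)
    (part : Fin 2 → Ω → Finset Ω) (C E : Finset Ω) (p : ℝ) : Prop :=
  IsGreatest {q : ℝ | pEvidentInd μ part q C E} p

/-- `G` is the maximally evident `C`-indicating superset of `F`. -/
def isMaxEvidentSup [Fintype Ω] [DecidableEq Ω] (μ : Ω → ℝ)
    (part : Fin 2 → Ω → Finset Ω) (C F G : Finset Ω) : Prop :=
  F ⊆ G ∧ ∃ p : ℝ, isEvidenceLevel μ part C G p ∧ isLargestInd μ part p C G ∧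
    ∀ H : Finset Ω, F ⊆ H → ∀ q : ℝ, isEvidenceLevel μ part C H q → q ≤ p

/-- `E` is a maximally evident `C`-indicating event: it is the maximally evident
`C`-indicating superset of some nonempty event. -/
def isMaxEvident [Fintype Ω] [DecidableEq Ω] (μ : Ω → ℝ)
    (part : Fin 2 → Ω → Finset Ω) (C E : Finset Ω) : Prop :=
  ∃ F : Finset Ω, F.Nonempty ∧ isMaxEvidentSup μ part C F E

/-- `E` is a super-`p`-evident `C`-indicating event. -/
def superEvidentInd [Fintype Ω] [DecidableEq Ω] (μ : Ω → ℝ)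
    (part : Fin 2 → Ω → Finset Ω) (p : ℝ) (C E : Finset Ω) : Prop :=
  ∀ i : Fin 2, ∀ ω ∈ E, p < condP μ part i E ω ∧ p < condP μ part i C ω

/-- `E` is the largest super-evident `C`-indicating subset of `F`. -/
def isLargestSuperSub [Fintype Ω] [DecidableEq Ω] (μ : Ω → ℝ)
    (part : Fin 2 → Ω → Finset Ω) (C F E : Finset Ω) : Prop :=
  E ⊆ F ∧ ∃ p : ℝ, isEvidenceLevel μ part C F p ∧ superEvidentInd μ part p C E ∧
    ∀ G : Finset Ω, G ⊆ F → superEvidentInd μ part p C G → G ⊆ E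

/-!
Conditional probabilities are monotone in the event, so the union `largestInd p` of all
`p`-evident `C`-indicating events is again one; it is antitone in `p`. A maximally evident event
is `largestInd` at its own evidence level, and conversely every nonempty `largestInd q` is
maximally evident. So the maximally evident events are the `largestInd r` for `r` in the finite
set of their levels, and listing these levels in increasing order gives the chain. For
consecutive levels `r < s`, a nonempty super-`r`-evident event has level above `r`, so it lies
in a maximally evident event of level above `r`, hence at least `s`, hence inside
`largestInd s`.
-/

section Evidence

variable [Fintype Ω] [DecidableEq Ω] {μ : Ω → ℝ} {part : Fin 2 → Ω → Finset Ω}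
  {C E F : Finset Ω} {p q r s : ℝ}

lemma condP_mono (hμ : ∀ ω, 0 ≤ μ ω) (h : E ⊆ F) (i : Fin 2) (ω : Ω) :
    condP μ part i E ω ≤ condP μ part i F ω :=
  div_le_div_of_nonneg_right
    (sum_le_sum_of_subset_of_nonneg (inter_subset_inter_right h) fun x _ _ => hμ x)
    (sum_nonneg fun x _ => hμ x)

lemma pEvidentInd.of_le (h : pEvidentInd μ part p C E) (hqp : q ≤ p) :
    pEvidentInd μ part q C E :=
  ⟨fun i ω hω => hqp.trans (h.1 i ω hω), fun i ω hω => hqp.trans (h.2 i ω hω)⟩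

lemma pEvidentInd.superEvidentInd (h : pEvidentInd μ part p C E) (hqp : q < p) :
    superEvidentInd μ part q C E :=
  fun i ω hω => ⟨hqp.trans_le (h.1 i ω hω), hqp.trans_le (h.2 i ω hω)⟩

/-- The empty event is `p`-evident `C`-indicating for every `p`, so it has no evidence level;
`0` is a junk value. -/
noncomputable def evidenceLevel (μ : Ω → ℝ) (part : Fin 2 → Ω → Finset Ω)
    (C E : Finset Ω) : ℝ :=
  if hE : E.Nonempty then
    (E ×ˢ univ).inf' (hE.product univ_nonempty)
      fun x : Ω × Fin 2 => min (condP μ part x.2 E x.1) (condP μ part x.2 C x.1)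
  else 0

lemma pEvidentInd_iff_le_evidenceLevel (hE : E.Nonempty) :
    pEvidentInd μ part q C E ↔ q ≤ evidenceLevel μ part C E := by
  simp only [evidenceLevel, dif_pos hE, le_inf'_iff, mem_product, mem_univ, and_true,
    le_min_iff, Prod.forall, pEvidentInd, pEvident]
  exact ⟨fun h ω i hω => ⟨h.1 i ω hω, h.2 i ω hω⟩,
    fun h => ⟨fun i ω hω => (h ω i hω).1, fun i ω hω => (h ω i hω).2⟩⟩

variable (μ part C) in
lemma pEvidentInd_evidenceLevel (hE : E.Nonempty) :
    pEvidentInd μ part (evidenceLevel μ part C E) C E :=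
  (pEvidentInd_iff_le_evidenceLevel hE).2 le_rfl

lemma superEvidentInd.lt_evidenceLevel (hE : E.Nonempty)
    (h : superEvidentInd μ part p C E) : p < evidenceLevel μ part C E := by
  rw [evidenceLevel, dif_pos hE, lt_inf'_iff]
  rintro ⟨ω, i⟩ hx
  exact lt_min (h i ω (mem_product.1 hx).1).1 (h i ω (mem_product.1 hx).1).2

variable (μ part C) in
lemma isEvidenceLevel_evidenceLevel (hE : E.Nonempty) :
    isEvidenceLevel μ part C E (evidenceLevel μ part C E) :=
  ⟨pEvidentInd_evidenceLevel μ part C hE, fun _ => (pEvidentInd_iff_le_evidenceLevel hE).1⟩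

lemma isEvidenceLevel.nonempty (h : isEvidenceLevel μ part C E p) : E.Nonempty := by
  rw [nonempty_iff_ne_empty]
  rintro rfl
  have hempty : pEvidentInd μ part (p + 1) C ∅ := ⟨by simp [pEvident], by simp⟩
  linarith [h.2 hempty]

lemma isEvidenceLevel.eq_evidenceLevel (h : isEvidenceLevel μ part C E p) :
    p = evidenceLevel μ part C E :=
  h.unique (isEvidenceLevel_evidenceLevel μ part C h.nonempty)

open Classical in
noncomputable def largestInd (μ : Ω → ℝ) (part : Fin 2 → Ω → Finset Ω) (p : ℝ)
    (C : Finset Ω) : Finset Ω :=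
  univ.filter fun ω => ∃ E, pEvidentInd μ part p C E ∧ ω ∈ E

lemma mem_largestInd {ω : Ω} :
    ω ∈ largestInd μ part p C ↔ ∃ E, pEvidentInd μ part p C E ∧ ω ∈ E := by
  simp [largestInd]

lemma pEvidentInd.subset_largestInd (h : pEvidentInd μ part p C E) :
    E ⊆ largestInd μ part p C :=
  fun _ hω => mem_largestInd.2 ⟨E, h, hω⟩

lemma largestInd_anti (hqp : q ≤ p) : largestInd μ part p C ⊆ largestInd μ part q C := by
  intro ω hω
  obtain ⟨E, hE, hωE⟩ := mem_largestInd.1 hω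
  exact mem_largestInd.2 ⟨E, hE.of_le hqp, hωE⟩

lemma pEvidentInd_largestInd (hμ : ∀ ω, 0 ≤ μ ω) :
    pEvidentInd μ part p C (largestInd μ part p C) := by
  constructor <;> intro i ω hω <;> obtain ⟨E, hE, hωE⟩ := mem_largestInd.1 hω
  · exact (hE.1 i ω hωE).trans (condP_mono hμ hE.subset_largestInd i ω)
  · exact hE.2 i ω hωE

lemma isLargestInd.eq_largestInd (hμ : ∀ ω, 0 ≤ μ ω) (h : isLargestInd μ part p C E) :
    E = largestInd μ part p C :=
  h.1.subset_largestInd.antisymm (h.2 _ (pEvidentInd_largestInd hμ))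

lemma le_evidenceLevel_largestInd (hμ : ∀ ω, 0 ≤ μ ω)
    (hne : (largestInd μ part p C).Nonempty) :
    p ≤ evidenceLevel μ part C (largestInd μ part p C) :=
  (pEvidentInd_iff_le_evidenceLevel hne).1 (pEvidentInd_largestInd hμ)

lemma isMaxEvident.nonempty (h : isMaxEvident μ part C E) : E.Nonempty :=
  let ⟨_, _, _, _, hp, _⟩ := h
  hp.nonempty

lemma isMaxEvident.eq_largestInd (hμ : ∀ ω, 0 ≤ μ ω) (h : isMaxEvident μ part C E) :
    E = largestInd μ part (evidenceLevel μ part C E) C := by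
  obtain ⟨-, -, -, p, hp, hlargest, -⟩ := h
  rw [← hp.eq_evidenceLevel]
  exact hlargest.eq_largestInd hμ

lemma isMaxEvident_largestInd (hμ : ∀ ω, 0 ≤ μ ω)
    (hne : (largestInd μ part q C).Nonempty) :
    isMaxEvident μ part C (largestInd μ part q C) := by
  set E := largestInd μ part q C
  have hqp : q ≤ evidenceLevel μ part C E := le_evidenceLevel_largestInd hμ hne
  refine ⟨E, hne, subset_rfl, _, isEvidenceLevel_evidenceLevel μ part C hne,
    ⟨pEvidentInd_evidenceLevel μ part C hne, fun F hF => (hF.of_le hqp).subset_largestInd⟩,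
    fun H hEH r hr => ?_⟩
  by_contra! hlt
  have hHE : H = E := ((hr.1.of_le (hqp.trans hlt.le)).subset_largestInd).antisymm hEH
  subst hHE
  exact hlt.ne' hr.eq_evidenceLevel

open Classical in
noncomputable def maxEvidentLevels (μ : Ω → ℝ) (part : Fin 2 → Ω → Finset Ω)
    (C : Finset Ω) : Finset ℝ :=
  (univ.filter (isMaxEvident μ part C)).image (evidenceLevel μ part C)

lemma mem_maxEvidentLevels : r ∈ maxEvidentLevels μ part C ↔
    ∃ E, isMaxEvident μ part C E ∧ evidenceLevel μ part C E = r := by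
  simp [maxEvidentLevels]

lemma isMaxEvident.evidenceLevel_mem (h : isMaxEvident μ part C E) :
    evidenceLevel μ part C E ∈ maxEvidentLevels μ part C :=
  mem_maxEvidentLevels.2 ⟨E, h, rfl⟩

lemma isMaxEvident_largestInd_of_mem (hμ : ∀ ω, 0 ≤ μ ω)
    (hr : r ∈ maxEvidentLevels μ part C) :
    isMaxEvident μ part C (largestInd μ part r C) ∧
      evidenceLevel μ part C (largestInd μ part r C) = r := by
  obtain ⟨E, hE, rfl⟩ := mem_maxEvidentLevels.1 hr
  rw [← hE.eq_largestInd hμ]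
  exact ⟨hE, rfl⟩

lemma exists_mem_maxEvidentLevels_largestInd_eq (hμ : ∀ ω, 0 ≤ μ ω)
    (hne : (largestInd μ part q C).Nonempty) :
    ∃ r ∈ maxEvidentLevels μ part C,
      q ≤ r ∧ largestInd μ part q C = largestInd μ part r C :=
  have hE := isMaxEvident_largestInd hμ hne
  ⟨_, hE.evidenceLevel_mem, le_evidenceLevel_largestInd hμ hne, hE.eq_largestInd hμ⟩

lemma isLargestSuperSub_largestInd (hμ : ∀ ω, 0 ≤ μ ω)
    (hr : r ∈ maxEvidentLevels μ part C) (hrs : r < s)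
    (hnext : ∀ t ∈ maxEvidentLevels μ part C, r < t → s ≤ t) :
    isLargestSuperSub μ part C (largestInd μ part r C) (largestInd μ part s C) := by
  obtain ⟨hmax, hlevel⟩ := isMaxEvident_largestInd_of_mem hμ hr
  have hrlevel : isEvidenceLevel μ part C (largestInd μ part r C) r := by
    simpa only [hlevel] using isEvidenceLevel_evidenceLevel μ part C hmax.nonempty
  refine ⟨largestInd_anti hrs.le, r, hrlevel, (pEvidentInd_largestInd hμ).superEvidentInd hrs,
    fun G _ hG => ?_⟩
  rcases G.eq_empty_or_nonempty with rfl | hGne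
  · exact empty_subset _
  have hGlevel := pEvidentInd_evidenceLevel μ part C hGne
  obtain ⟨t, ht, hGt, heq⟩ :=
    exists_mem_maxEvidentLevels_largestInd_eq hμ (hGne.mono hGlevel.subset_largestInd)
  calc G ⊆ largestInd μ part (evidenceLevel μ part C G) C := hGlevel.subset_largestInd
    _ = largestInd μ part t C := heq
    _ ⊆ largestInd μ part s C :=
      largestInd_anti (hnext t ht ((hG.lt_evidenceLevel hGne).trans_le hGt))

end Evidence

theorem maxEvident_nested_chain_general [Fintype Ω] [DecidableEq Ω]
    (μ : Ω → ℝ) (part : Fin 2 → Ω → Finset Ω)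
    (hμpos : ∀ ω : Ω, 0 < μ ω)
    (C : Finset Ω) :
    ∃ (n : ℕ) (E : Fin n → Finset Ω),
      (∀ j : Fin n, isMaxEvident μ part C (E j)) ∧
      (∀ F : Finset Ω, isMaxEvident μ part C F → ∃ j : Fin n, F = E j) ∧
      (∀ j k : Fin n, j < k → E k ⊂ E j) ∧
      (∀ j k : Fin n, j < k → ∀ p q : ℝ,
        isEvidenceLevel μ part C (E j) p → isEvidenceLevel μ part C (E k) q → p < q) ∧
      (∀ j k : Fin n, (j : ℕ) + 1 = (k : ℕ) → isLargestSuperSub μ part C (E j) (E k)) := by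
  have hμ : ∀ ω, 0 ≤ μ ω := fun ω => (hμpos ω).le
  let s := (maxEvidentLevels μ part C).orderIsoOfFin rfl
  have hs (j) := isMaxEvident_largestInd_of_mem hμ (s j).2
  refine ⟨_, fun j => largestInd μ part (s j) C, fun j => (hs j).1, fun F hF => ?_,
    fun j k hjk => ?_, fun j k hjk p q hp hq => ?_, fun j k hjk => ?_⟩
  · exact ⟨s.symm ⟨_, hF.evidenceLevel_mem⟩, by simpa using hF.eq_largestInd hμ⟩
  · have hlt : (s j : ℝ) < s k := s.strictMono hjk
    refine (largestInd_anti hlt.le).ssubset_of_ne fun h => hlt.ne' ?_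
    rw [← (hs k).2, h, (hs j).2]
  · rw [hp.eq_evidenceLevel, hq.eq_evidenceLevel, (hs j).2, (hs k).2]
    exact s.strictMono hjk
  · have hcov : s j ⋖ s k :=
      (apply_covBy_apply_iff s).2 (Fin.covBy_iff.2 (Nat.covBy_iff_add_one_eq.2 hjk))
    exact isLargestSuperSub_largestInd hμ (s j).2 hcov.lt fun t ht hjt =>
      hcov.ge_of_gt (c := ⟨t, ht⟩) hjt

/-- The collection of all maximally evident `C`-indicating events can be enumerated as a
strictly nested chain with strictly increasing `C`-evidence levels, in which each event is
the largest super-evident `C`-indicating subset of its predecessor. -/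
theorem maxEvident_nested_chain [Fintype Ω] [DecidableEq Ω] [Nonempty Ω]
    (μ : Ω → ℝ) (part : Fin 2 → Ω → Finset Ω)
    (hμpos : ∀ ω : Ω, 0 < μ ω) (hμsum : ∑ ω : Ω, μ ω = 1)
    (hmem : ∀ (i : Fin 2) (ω : Ω), ω ∈ part i ω)
    (hcell : ∀ (i : Fin 2) (ω ω' : Ω), ω' ∈ part i ω → part i ω' = part i ω)
    (C : Finset Ω) :
    ∃ (n : ℕ) (E : Fin n → Finset Ω),
      (∀ j : Fin n, isMaxEvident μ part C (E j)) ∧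
      (∀ F : Finset Ω, isMaxEvident μ part C F → ∃ j : Fin n, F = E j) ∧
      (∀ j k : Fin n, j < k → E k ⊂ E j) ∧
      (∀ j k : Fin n, j < k → ∀ p q : ℝ,
        isEvidenceLevel μ part C (E j) p → isEvidenceLevel μ part C (E k) q → p < q) ∧
      (∀ j k : Fin n, (j : ℕ) + 1 = (k : ℕ) → isLargestSuperSub μ part C (E j) (E k)) :=
  maxEvident_nested_chain_general μ part hμpos C
end

section
/- Fix p > 0 and a player i ∈ {0,1}. Let E be a p-evident C-indicating event, let ω be a state with P_i(C | ω) ≥ p, and let S be a subset of Π_i(ω) such that P_i(S | ω) ≥ p and P_{1−i}(E | ω') ≥ p for every ω' ∈ S. Then S ∪ E is a p-evident C-indicating event. -/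
open Finset

variable {Ω : Type*}

section condP

variable [Fintype Ω] [DecidableEq Ω] {μ : Ω → ℝ} {part : Fin 2 → Ω → Finset Ω} {i : Fin 2}

theorem condP_mono_s12 (hμ : ∀ x, 0 ≤ μ x) {A B : Finset Ω} (hAB : A ⊆ B) (ω : Ω) :
    condP μ part i A ω ≤ condP μ part i B ω := by
  unfold condP
  gcongr
  · exact sum_nonneg fun x _ => hμ x
  · exact fun x _ _ => hμ x

theorem condP_congr_cell {ω ω' : Ω} (h : part i ω' = part i ω) (A : Finset Ω) :
    condP μ part i A ω' = condP μ part i A ω := by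
  rw [condP, condP, h]

theorem nonempty_inter_cell_of_pos_condP {A : Finset Ω} {ω : Ω}
    (h : 0 < condP μ part i A ω) : (A ∩ part i ω).Nonempty := by
  contrapose! h
  simp [condP, h]

/-- Belief in `C` is constant on cells, and a positive belief in `E` at `ω` means that the
cell of `ω` meets `E`. -/
theorem le_condP_of_le_condP_of_forall_mem
    (hcell : ∀ ω ω' : Ω, ω' ∈ part i ω → part i ω' = part i ω) {p : ℝ} (hp : 0 < p)
    {C E : Finset Ω} (hEC : ∀ x ∈ E, p ≤ condP μ part i C x) {ω : Ω}
    (hE : p ≤ condP μ part i E ω) : p ≤ condP μ part i C ω := by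
  obtain ⟨x, hx⟩ := nonempty_inter_cell_of_pos_condP (hp.trans_le hE)
  obtain ⟨hxE, hxω⟩ := mem_inter.mp hx
  rw [← condP_congr_cell (hcell ω x hxω)]
  exact hEC x hxE

theorem pEvidentInd_union (hμ : ∀ x, 0 ≤ μ x) {p : ℝ} {C E S : Finset Ω}
    (hE : pEvidentInd μ part p C E)
    (hS : ∀ j : Fin 2, ∀ ω ∈ S, p ≤ condP μ part j (S ∪ E) ω ∧ p ≤ condP μ part j C ω) :
    pEvidentInd μ part p C (S ∪ E) := by
  refine ⟨fun j ω hω => ?_, fun j ω hω => ?_⟩ <;> rcases mem_union.mp hω with hωS | hωE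
  · exact (hS j ω hωS).1
  · exact (hE.1 j ω hωE).trans (condP_mono_s12 hμ subset_union_right ω)
  · exact (hS j ω hωS).2
  · exact hE.2 j ω hωE

end condP

theorem Fin.eq_or_eq_one_sub (i j : Fin 2) : j = i ∨ j = 1 - i := by
  decide +revert

theorem union_pEvidentInd_of_pBelief_general [Fintype Ω] [DecidableEq Ω]
    (μ : Ω → ℝ) (part : Fin 2 → Ω → Finset Ω)
    (hμpos : ∀ ω : Ω, 0 < μ ω)
    (hcell : ∀ (i : Fin 2) (ω ω' : Ω), ω' ∈ part i ω → part i ω' = part i ω)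
    (p : ℝ) (hp : 0 < p) (i : Fin 2) (C E S : Finset Ω) (ω : Ω)
    (hE : pEvidentInd μ part p C E)
    (hC : p ≤ condP μ part i C ω)
    (hSsub : S ⊆ part i ω)
    (hSbel : p ≤ condP μ part i S ω)
    (hSE : ∀ ω' ∈ S, p ≤ condP μ part (1 - i) E ω') :
    pEvidentInd μ part p C (S ∪ E) := by
  have hμ : ∀ x, 0 ≤ μ x := fun x => (hμpos x).le
  refine pEvidentInd_union hμ hE fun j ω' hω' => ?_
  rcases Fin.eq_or_eq_one_sub i j with rfl | rfl
  · have hω'ω := hcell j ω ω' (hSsub hω')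
    rw [condP_congr_cell hω'ω, condP_congr_cell hω'ω]
    exact ⟨hSbel.trans (condP_mono_s12 hμ subset_union_left ω), hC⟩
  · exact ⟨(hSE ω' hω').trans (condP_mono_s12 hμ subset_union_right ω'),
      le_condP_of_le_condP_of_forall_mem (hcell _) hp (hE.2 _) (hSE ω' hω')⟩

/-- If `E` is a `p`-evident `C`-indicating event, player `i` `p`-believes `C` at `ω`, and
`S` is a subset of the cell of `ω` such that player `i` `p`-believes `S` at `ω` and player
`1 - i` `p`-believes `E` at every state of `S`, then `S ∪ E` is a `p`-evident
`C`-indicating event. -/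
theorem union_pEvidentInd_of_pBelief [Fintype Ω] [DecidableEq Ω] [Nonempty Ω]
    (μ : Ω → ℝ) (part : Fin 2 → Ω → Finset Ω)
    (hμpos : ∀ ω : Ω, 0 < μ ω) (hμsum : ∑ ω : Ω, μ ω = 1)
    (hmem : ∀ (i : Fin 2) (ω : Ω), ω ∈ part i ω)
    (hcell : ∀ (i : Fin 2) (ω ω' : Ω), ω' ∈ part i ω → part i ω' = part i ω)
    (p : ℝ) (hp : 0 < p) (i : Fin 2) (C E S : Finset Ω) (ω : Ω)
    (hE : pEvidentInd μ part p C E)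
    (hC : p ≤ condP μ part i C ω)
    (hSsub : S ⊆ part i ω)
    (hSbel : p ≤ condP μ part i S ω)
    (hSE : ∀ ω' ∈ S, p ≤ condP μ part (1 - i) E ω') :
    pEvidentInd μ part p C (S ∪ E) :=
  union_pEvidentInd_of_pBelief_general μ part hμpos hcell p hp i C E S ω hE hC hSsub hSbel hSE
end
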